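/- Let (G, 𝒫, 𝒯) be an instance of Partitioned Vertex Cover and let H be the Popular Matching instance constructed from it. If M is a popular matching in H, then for every vertex i of G, either {a_i, b_i} ∈ M, or both {a_i, d_i} ∈ M and {b_i, c_i} ∈ M. -/

import Mathlib

open SimpleGraph

universe u

/-- A matching: a set of edges of `G` that are pairwise vertex-disjoint. -/
def IsMatching {W : Type u} (G : SimpleGraph W) (M : Set (Sym2 W)) : Prop :=
  M ⊆ G.edgeSet ∧ ∀ e ∈ M, ∀ e' ∈ M, e ≠ e' → ∀ v : W, v ∈ e → v ∉ e'

/-- `v` is matched by `M`. -/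
def Matched {W : Type u} (M : Set (Sym2 W)) (v : W) : Prop := ∃ w : W, s(v, w) ∈ M

open scoped Classical in
/-- `rank G pref M v = pref v (M(v))`, with the convention `|N(v)|+1` if `v` is unmatched. -/
noncomputable def rank {W : Type u} (G : SimpleGraph W) (pref : W → W → ℕ)
    (M : Set (Sym2 W)) (v : W) : ℕ :=
  if h : ∃ w : W, s(v, w) ∈ M then pref v h.choose else (G.neighborSet v).ncard + 1

/-- The number of vertices preferring `M` over `M'`. -/
noncomputable def vote {W : Type u} (G : SimpleGraph W) (pref : W → W → ℕ)
    (M M' : Set (Sym2 W)) : ℕ :=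
  {v : W | rank G pref M v < rank G pref M' v}.ncard

/-- A popular matching: no other matching is more popular. -/
def IsPopular {W : Type u} (G : SimpleGraph W) (pref : W → W → ℕ) (M : Set (Sym2 W)) : Prop :=
  IsMatching G M ∧
    ∀ M' : Set (Sym2 W), IsMatching G M' → vote G pref M' M ≤ vote G pref M M'

/-- Each vertex has a strict preference list: `pref v` is a bijection from the
neighborhood of `v` onto `{1, …, |N(v)|}`. -/
def HasPref {W : Type u} (G : SimpleGraph W) (pref : W → W → ℕ) : Prop :=
  ∀ v : W, Set.BijOn (pref v) (G.neighborSet v) (Set.Icc 1 (G.neighborSet v).ncard)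

/-- The edge `e ∉ M` is labeled `+2` by `label_M` (given rank function `rk`):
both endpoints prefer each other over their status in `M`. -/
def EdgePlus {W : Type u} (pref : W → W → ℕ) (rk : W → ℕ) (e : Sym2 W) : Prop :=
  ∃ x y : W, e = s(x, y) ∧ pref x y < rk x ∧ pref y x < rk y

/-- The edge `e ∉ M` is labeled `-2` by `label_M` (given rank function `rk`):
both endpoints prefer their status in `M` over each other. -/
def EdgeMinus {W : Type u} (pref : W → W → ℕ) (rk : W → ℕ) (e : Sym2 W) : Prop :=
  ∃ x y : W, e = s(x, y) ∧ rk x < pref x y ∧ rk y < pref y x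

/-- The graph `G_M`: the spanning subgraph of `G` consisting of the edges of `M`
together with the edges not labeled `-2`. -/
def GMgraph {W : Type u} (G : SimpleGraph W) (pref : W → W → ℕ) (M : Set (Sym2 W)) :
    SimpleGraph W where
  Adj x y := G.Adj x y ∧ (s(x, y) ∈ M ∨ ¬ EdgeMinus pref (rank G pref M) s(x, y))
  symm := by
    constructor
    intro x y h
    refine ⟨h.1.symm, ?_⟩
    rw [Sym2.eq_swap]
    exact h.2
  loopless := ⟨fun x h => G.irrefl h.1⟩

/-- Consecutive edges alternate between `M` and non-`M`. -/
def altRel {W : Type u} (M : Set (Sym2 W)) (e e' : Sym2 W) : Prop := e ∈ M ↔ e' ∉ M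

/-- An alternating path (with respect to `M`) in a graph `G'`. -/
def IsAltPath {W : Type u} (M : Set (Sym2 W)) {G' : SimpleGraph W} {x y : W}
    (p : G'.Walk x y) : Prop :=
  p.IsPath ∧ List.Chain' (altRel M) p.edges ∧
    (∀ e, p.edges.head? = some e → e ∉ M → ¬ Matched M x) ∧
    (∀ e, p.edges.getLast? = some e → e ∉ M → ¬ Matched M y)

/-- An alternating cycle (with respect to `M`) in a graph `G'`:
the edges alternate cyclically between `M` and non-`M`. -/
def IsAltCycle {W : Type u} (M : Set (Sym2 W)) {G' : SimpleGraph W} {x : W}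
    (p : G'.Walk x x) : Prop :=
  p.IsCycle ∧ List.Chain' (altRel M) (p.edges ++ p.edges.take 1)

/-- `l` contains at least one edge labeled `+2`. -/
def OnePlusEdge {W : Type u} (pref : W → W → ℕ) (rk : W → ℕ) (l : List (Sym2 W)) : Prop :=
  ∃ e ∈ l, EdgePlus pref rk e

/-- `l` contains at least two edges labeled `+2`. -/
def TwoPlusEdges {W : Type u} (pref : W → W → ℕ) (rk : W → ℕ) (l : List (Sym2 W)) : Prop :=
  ∃ e ∈ l, ∃ e' ∈ l, e ≠ e' ∧ EdgePlus pref rk e ∧ EdgePlus pref rk e'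

/-- A vertex cover. -/
def IsVC {V : Type u} (G : SimpleGraph V) (U : Set V) : Prop :=
  ∀ ⦃x y : V⦄, G.Adj x y → x ∈ U ∨ y ∈ U
/-- An instance of Partitioned Vertex Cover: `G` is a finite simple graph, `P` is a
collection of pairwise disjoint edges of `G`, `T` is a collection of pairwise disjoint
3-element vertex sets each inducing a triangle in `G`, and every vertex of `G` lies in
exactly one member of `P ∪ T`. -/
def IsPVC {V : Type u} (G : SimpleGraph V) (P : Set (Sym2 V)) (T : Set (Finset V)) : Prop :=
  Finite V ∧
  P ⊆ G.edgeSet ∧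
  (∀ e ∈ P, ∀ e' ∈ P, e ≠ e' → ∀ v : V, v ∈ e → v ∉ e') ∧
  (∀ t ∈ T, t.card = 3) ∧
  (∀ t ∈ T, ∀ x ∈ t, ∀ y ∈ t, x ≠ y → G.Adj x y) ∧
  (∀ t ∈ T, ∀ t' ∈ T, t ≠ t' → ∀ v : V, v ∈ t → v ∉ t') ∧
  (∀ v : V, (∃ e ∈ P, v ∈ e) ∨ (∃ t ∈ T, v ∈ t)) ∧
  (∀ v : V, ¬ ((∃ e ∈ P, v ∈ e) ∧ (∃ t ∈ T, v ∈ t)))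

/-- A solution of a Partitioned Vertex Cover instance: a vertex cover `U` with
`|U ∩ P| = 1` for every pair `P` and `|U ∩ T| = 2` for every triple `T`. -/
def IsPVCSolution {V : Type u} (G : SimpleGraph V) (P : Set (Sym2 V)) (T : Set (Finset V))
    (U : Set V) : Prop :=
  IsVC G U ∧
  (∀ e ∈ P, {x : V | x ∈ e ∧ x ∈ U}.ncard = 1) ∧
  (∀ t ∈ T, {x : V | x ∈ t ∧ x ∈ U}.ncard = 2)

/-- The vertices of the graph `H` built from a Partitioned Vertex Cover instance:
`a i`, `b i`, `c i`, `d i` for a vertex `i` of `G`; `u i j` is the vertex `u^e_i` for the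
edge `e = {i,j}` of `G`; `f i j` is the vertex `f_{ij}` for the pair `{i,j} ∈ P`. -/
inductive Gad (V : Type u) : Type u where
  | a : V → Gad V
  | b : V → Gad V
  | c : V → Gad V
  | d : V → Gad V
  | u : V → V → Gad V
  | f : V → V → Gad V
deriving DecidableEq

/-- Which formal gadget vertices are really vertices of `H`. -/
def Gad.valid {V : Type u} (G : SimpleGraph V) (P : Set (Sym2 V)) : Gad V → Prop
  | .u i j => G.Adj i j
  | .f i j => s(i, j) ∈ P
  | _ => True

/-- The edges of `H`, up to symmetry. -/
inductive HBase {V : Type u} (G : SimpleGraph V) (P : Set (Sym2 V)) (T : Set (Finset V)) :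
    Gad V → Gad V → Prop where
  | da (i : V) : HBase G P T (.d i) (.a i)
  | ab (i : V) : HBase G P T (.a i) (.b i)
  | ac (i : V) : HBase G P T (.a i) (.c i)
  | bc (i : V) : HBase G P T (.b i) (.c i)
  | uu {i j : V} (h : G.Adj i j) : HBase G P T (.u i j) (.u j i)
  | bu {i j : V} (h : G.Adj i j) : HBase G P T (.b i) (.u i j)
  | df {i j : V} (h : s(i, j) ∈ P) : HBase G P T (.d i) (.f i j)
  | fc {i j : V} (h : s(i, j) ∈ P) : HBase G P T (.f i j) (.c j)
  | cd {i j : V} (h : s(i, j) ∈ P) : HBase G P T (.c i) (.d j)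
  | dd {i j : V} {t : Finset V} (ht : t ∈ T) (hi : i ∈ t) (hj : j ∈ t) (hne : i ≠ j) :
      HBase G P T (.d i) (.d j)
  | cc {i j : V} {t : Finset V} (ht : t ∈ T) (hi : i ∈ t) (hj : j ∈ t) (hne : i ≠ j) :
      HBase G P T (.c i) (.c j)

/-- The graph `H` of the Popular Matching instance built from `(G, P, T)`. -/
def Hgraph {V : Type u} (G : SimpleGraph V) (P : Set (Sym2 V)) (T : Set (Finset V)) :
    SimpleGraph {g : Gad V // Gad.valid G P g} where
  Adj x y := x ≠ y ∧ (HBase G P T x.1 y.1 ∨ HBase G P T y.1 x.1)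
  symm := ⟨fun _ _ h => ⟨h.1.symm, h.2.symm⟩⟩
  loopless := ⟨fun _ h => h.1 rfl⟩

/-- The Popular Matching instance (graph together with preference lists) constructed
from a Partitioned Vertex Cover instance `(G, P, T)`.  The field `pref` gives the
preference lists; all its values on the neighborhoods in `H` are pinned down, except
the ranks that `b i` assigns to the vertices `u^e_i`, which form an arbitrary fixed
bijection onto `{2, …, deg_G(i) + 1}`. -/
structure Reduction (V : Type u) [LinearOrder V] : Type u where
  G : SimpleGraph V
  P : Set (Sym2 V)
  T : Set (Finset V)
  ispvc : IsPVC G P T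
  pref : Gad V → Gad V → ℕ
  pref_ab : ∀ i : V, pref (.a i) (.b i) = 1
  pref_ac : ∀ i : V, pref (.a i) (.c i) = 2
  pref_ad : ∀ i : V, pref (.a i) (.d i) = 3
  pref_ba : ∀ i : V, pref (.b i) (.a i) = 1
  pref_bu : ∀ i : V, Set.BijOn (pref (.b i)) {g : Gad V | ∃ j : V, G.Adj i j ∧ g = .u i j}
      (Set.Icc 2 ((G.neighborSet i).ncard + 1))
  pref_bc : ∀ i : V, pref (.b i) (.c i) = (G.neighborSet i).ncard + 2
  pref_ca : ∀ i : V, pref (.c i) (.a i) = 1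
  pref_cb : ∀ i : V, pref (.c i) (.b i) = 2
  pref_da : ∀ i : V, pref (.d i) (.a i) = 1
  pref_uu : ∀ i j : V, G.Adj i j → pref (.u i j) (.u j i) = 1
  pref_ub : ∀ i j : V, G.Adj i j → pref (.u i j) (.b i) = 2
  pref_cf : ∀ i j : V, s(i, j) ∈ P → pref (.c i) (.f j i) = 3
  pref_cd : ∀ i j : V, s(i, j) ∈ P → pref (.c i) (.d j) = 4
  pref_dc : ∀ i j : V, s(i, j) ∈ P → pref (.d i) (.c j) = 2
  pref_df : ∀ i j : V, s(i, j) ∈ P → pref (.d i) (.f i j) = 3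
  pref_fd : ∀ i j : V, s(i, j) ∈ P → pref (.f i j) (.d i) = 1
  pref_fc : ∀ i j : V, s(i, j) ∈ P → pref (.f i j) (.c j) = 2
  pref_tri : ∀ t ∈ T, ∀ i j k : V, t = {i, j, k} → i < j → j < k →
    pref (.c i) (.c k) = 3 ∧ pref (.c i) (.c j) = 4 ∧
    pref (.c j) (.c i) = 3 ∧ pref (.c j) (.c k) = 4 ∧
    pref (.c k) (.c j) = 3 ∧ pref (.c k) (.c i) = 4 ∧
    pref (.d i) (.d j) = 2 ∧ pref (.d i) (.d k) = 3 ∧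
    pref (.d j) (.d k) = 2 ∧ pref (.d j) (.d i) = 3 ∧
    pref (.d k) (.d i) = 2 ∧ pref (.d k) (.d j) = 3

namespace Reduction

variable {V : Type u} [LinearOrder V] (R : Reduction V)

/-- The vertex set of `H`. -/
abbrev HV : Type u := {g : Gad V // Gad.valid R.G R.P g}

/-- The graph `H`. -/
def H : SimpleGraph R.HV := Hgraph R.G R.P R.T

/-- The preference lists of `H`, as a function on its vertices. -/
def prefH : R.HV → R.HV → ℕ := fun x y => R.pref x.1 y.1

/-- The vertex `a_i` of `H`. -/
def va (i : V) : R.HV := ⟨.a i, trivial⟩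
/-- The vertex `b_i` of `H`. -/
def vb (i : V) : R.HV := ⟨.b i, trivial⟩
/-- The vertex `c_i` of `H`. -/
def vc (i : V) : R.HV := ⟨.c i, trivial⟩
/-- The vertex `d_i` of `H`. -/
def vd (i : V) : R.HV := ⟨.d i, trivial⟩
/-- The vertex `u^e_i` of `H`, for an edge `e = {i,j}` of `G`. -/
def vu (i j : V) (h : R.G.Adj i j) : R.HV := ⟨.u i j, h⟩
/-- The vertex `f_{ij}` of `H`, for a pair `{i,j} ∈ P`. -/
def vf (i j : V) (h : s(i, j) ∈ R.P) : R.HV := ⟨.f i j, h⟩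

/-- The matching `M*` in `H` constructed from a solution `U`. -/
def Mstar (U : Set V) : Set (Sym2 R.HV) :=
  {e : Sym2 R.HV |
    (∃ (i j : V) (h : R.G.Adj i j), e = s(R.vu i j h, R.vu j i h.symm)) ∨
    (∃ (x y : V) (h : s(x, y) ∈ R.P) (h' : s(y, x) ∈ R.P), x ∉ U ∧ y ∈ U ∧
      (e = s(R.va x, R.vd x) ∨ e = s(R.vb x, R.vc x) ∨ e = s(R.va y, R.vb y) ∨
       e = s(R.vf x y h, R.vc y) ∨ e = s(R.vf y x h', R.vd y))) ∨
    (∃ t ∈ R.T, ∃ x y z : V, t = {x, y, z} ∧ x ∉ U ∧ y ∈ U ∧ z ∈ U ∧ y ≠ z ∧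
      R.pref (.d x) (.d y) < R.pref (.d x) (.d z) ∧
      (e = s(R.va x, R.vd x) ∨ e = s(R.vb x, R.vc x) ∨ e = s(R.va y, R.vb y) ∨
       e = s(R.va z, R.vb z) ∨ e = s(R.vc y, R.vc z) ∨ e = s(R.vd y, R.vd z)))}

end Reduction

/-- The vertex set of the Pair Selector gadget associated with a pair `{i,j}`. -/
def pairGadget {V : Type u} (i j : V) : Set (Gad V) :=
  {g : Gad V | ∃ x : V, (x = i ∨ x = j) ∧ (g = .a x ∨ g = .b x ∨ g = .c x ∨ g = .d x)} ∪
    {Gad.f i j, Gad.f j i}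

/-- The vertex set of the Triple Selector gadget associated with a triple `t`. -/
def tripleGadget {V : Type u} (t : Finset V) : Set (Gad V) :=
  {g : Gad V | ∃ x ∈ t, g = .a x ∨ g = .b x ∨ g = .c x ∨ g = .d x}

/-!
Write `a, b, c, d` for `a_i, b_i, c_i, d_i`. Since `a` and `b` rank each other first, the edge
`ab`, if it is not in `M`, is blocking: both endpoints prefer it to their status in `M`.
A blocking edge with an unmatched endpoint contradicts popularity (switching it in makes two
vertices better off and at most one worse off), so `a` and `b` are both matched. If `b` were
matched to some `u^e_i`, then `u^e_i u^e_j` would be blocking as well, and switching along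
`p – a – b – u^e_i – u^e_j – q` would make four vertices better off and only `p, q` worse off.
So `b` is matched to `c`, and then `a` is matched to `d`.
-/

section Popular

variable {W : Type u} {G : SimpleGraph W} {pref : W → W → ℕ} {M : Set (Sym2 W)}

lemma IsMatching.eq_of_mem {v w w' : W} (hM : IsMatching G M) (h : s(v, w) ∈ M)
    (h' : s(v, w') ∈ M) : w = w' := by
  by_cases he : s(v, w) = s(v, w')
  · rcases Sym2.eq_iff.mp he with ⟨-, h⟩ | ⟨h₁, h₂⟩
    exacts [h, h₂.trans h₁]
  · exact absurd (Sym2.mem_mk_left v w') (hM.2 _ h _ h' he v (Sym2.mem_mk_left v w))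

lemma IsMatching.singleton {e : Sym2 W} (he : e ∈ G.edgeSet) : IsMatching G {e} :=
  ⟨Set.singleton_subset_iff.mpr he, fun _ h _ h' hne => absurd (h.trans h'.symm) hne⟩

lemma rank_eq_of_mem {v w : W} (hM : IsMatching G M) (h : s(v, w) ∈ M) :
    rank G pref M v = pref v w := by
  have hv : ∃ x, s(v, x) ∈ M := ⟨w, h⟩
  rw [rank, dif_pos hv, hM.eq_of_mem hv.choose_spec h]

lemma rank_of_not_matched {v : W} (h : ¬ Matched M v) :
    rank G pref M v = (G.neighborSet v).ncard + 1 :=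
  dif_neg h

lemma one_le_ncard_neighborSet [Finite W] {v w : W} (h : G.Adj v w) :
    1 ≤ (G.neighborSet v).ncard :=
  (Set.ncard_pos (Set.toFinite _)).mpr ⟨w, h⟩

lemma lt_rank {v : W} {k : ℕ} (hM : IsMatching G M)
    (hpartner : ∀ w, s(v, w) ∈ M → k < pref v w) (hk : k ≤ (G.neighborSet v).ncard) :
    k < rank G pref M v := by
  by_cases hv : Matched M v
  · obtain ⟨w, hw⟩ := hv
    rw [rank_eq_of_mem hM hw]
    exact hpartner w hw
  · rw [rank_of_not_matched hv]
    omega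

def rewire (M : Set (Sym2 W)) (S : Set W) (N : Set (Sym2 W)) : Set (Sym2 W) :=
  {e ∈ M | ∀ v ∈ e, v ∉ S} ∪ N

variable {S : Set W} {N : Set (Sym2 W)}

lemma IsMatching.rewire (hM : IsMatching G M) (hN : IsMatching G N)
    (hNS : ∀ e ∈ N, ∀ v ∈ e, v ∈ S) : IsMatching G (rewire M S N) := by
  constructor
  · rintro e (⟨he, -⟩ | he)
    exacts [hM.1 he, hN.1 he]
  · rintro e (⟨he, heS⟩ | he) e' (⟨he', he'S⟩ | he') hne v hv
    · exact hM.2 _ he _ he' hne v hv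
    · exact fun hv' => heS v hv (hNS _ he' v hv')
    · exact fun hv' => he'S v hv' (hNS _ he v hv)
    · exact hN.2 _ he _ he' hne v hv

lemma rank_rewire_of_not_mem (hM : IsMatching G M) (hM' : IsMatching G (rewire M S N))
    (hNS : ∀ e ∈ N, ∀ v ∈ e, v ∈ S) {v : W} (hv : v ∉ S) (hvS : ∀ w ∈ S, s(v, w) ∉ M) :
    rank G pref (rewire M S N) v = rank G pref M v := by
  by_cases hm : Matched M v
  · obtain ⟨w, hw⟩ := hm
    have hw' : s(v, w) ∈ rewire M S N := by
      refine Or.inl ⟨hw, fun x hx => ?_⟩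
      rcases Sym2.mem_iff.mp hx with rfl | rfl
      exacts [hv, fun hxS => hvS x hxS hw]
    rw [rank_eq_of_mem hM' hw', rank_eq_of_mem hM hw]
  · have hm' : ¬ Matched (rewire M S N) v := by
      rintro ⟨w, ⟨hw, -⟩ | hw⟩
      exacts [hm ⟨w, hw⟩, hv (hNS _ hw v (Sym2.mem_mk_left v w))]
    rw [rank_of_not_matched hm', rank_of_not_matched hm]

lemma IsPopular.ncard_le_of_rewire [Finite W] (hM : IsPopular G pref M) (hN : IsMatching G N)
    (hNS : ∀ e ∈ N, ∀ v ∈ e, v ∈ S)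
    (hgain : ∀ v ∈ S, ∃ w, s(v, w) ∈ N ∧ pref v w < rank G pref M v) :
    S.ncard ≤ {v | v ∉ S ∧ ∃ w ∈ S, s(v, w) ∈ M}.ncard := by
  have hM' := hM.1.rewire hN hNS
  have hgainers : S ⊆ {v | rank G pref (rewire M S N) v < rank G pref M v} := by
    intro v hv
    obtain ⟨w, hw, hlt⟩ := hgain v hv
    exact (rank_eq_of_mem hM' (Or.inr hw)).trans_lt hlt
  have hlosers : {v | rank G pref M v < rank G pref (rewire M S N) v} ⊆
      {v | v ∉ S ∧ ∃ w ∈ S, s(v, w) ∈ M} := by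
    intro v (hv : rank G pref M v < rank G pref (rewire M S N) v)
    by_cases hvS : v ∈ S
    · exact absurd hv (lt_asymm (hgainers hvS))
    refine ⟨hvS, ?_⟩
    by_contra! hpartner
    exact lt_irrefl _ (hv.trans_eq (rank_rewire_of_not_mem hM.1 hM' hNS hvS hpartner))
  calc S.ncard ≤ vote G pref (rewire M S N) M := Set.ncard_le_ncard hgainers
    _ ≤ vote G pref M (rewire M S N) := hM.2 _ hM'
    _ ≤ _ := Set.ncard_le_ncard hlosers

lemma IsMatching.ncard_partners_le_one (hM : IsMatching G M) (x : W) :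
    {v | s(v, x) ∈ M}.ncard ≤ 1 := by
  have h : {v | s(v, x) ∈ M}.Subsingleton := fun _ hv _ hw =>
    hM.eq_of_mem (by rwa [Sym2.eq_swap]) (by rwa [Sym2.eq_swap])
  exact (Set.ncard_le_one h.finite).mpr h

lemma IsPopular.matched_of_blocking [Finite W] {x y : W} (hM : IsPopular G pref M)
    (hxy : G.Adj x y) (hx : pref x y < rank G pref M x) (hy : pref y x < rank G pref M y) :
    Matched M x := by
  by_contra hux
  have hN : IsMatching G {s(x, y)} := .singleton hxy
  have hcard := hM.ncard_le_of_rewire (S := {x, y}) hN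
    (by rintro e rfl v hv; simpa using hv)
    (by rintro v (h | h) <;> subst h; exacts [⟨y, rfl, hx⟩, ⟨x, Sym2.eq_swap, hy⟩])
  have hlosers : {v | v ∉ ({x, y} : Set W) ∧ ∃ w ∈ ({x, y} : Set W), s(v, w) ∈ M} ⊆
      {v | s(v, y) ∈ M} := by
    rintro v ⟨-, w, h | h, hw⟩ <;> subst h
    exacts [absurd ⟨v, by rwa [Sym2.eq_swap]⟩ hux, hw]
  have := (Set.ncard_le_ncard hlosers).trans (hM.1.ncard_partners_le_one y)
  rw [Set.ncard_pair hxy.ne] at hcard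
  omega

lemma IsPopular.false_of_two_blocking [Finite W] {x y z z' : W} (hM : IsPopular G pref M)
    (hxy : G.Adj x y) (hzz' : G.Adj z z') (hxz : x ≠ z) (hxz' : x ≠ z') (hyz : y ≠ z)
    (hyz' : y ≠ z') (hyzM : s(y, z) ∈ M)
    (hx : pref x y < rank G pref M x) (hy : pref y x < rank G pref M y)
    (hz : pref z z' < rank G pref M z) (hz' : pref z' z < rank G pref M z') : False := by
  have hN : IsMatching G {s(x, y), s(z, z')} := by
    refine ⟨?_, ?_⟩
    · rintro e (rfl | rfl)
      exacts [hxy, hzz']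
    · rintro e (rfl | rfl) e' (rfl | rfl) hne v hv hv' <;>
        simp only [Sym2.mem_iff] at hv hv' <;> grind
  have hcard := hM.ncard_le_of_rewire (S := {x, y, z, z'}) hN
    (by rintro e (rfl | rfl) v hv <;> simp only [Sym2.mem_iff] at hv <;> grind)
    (by
      rintro v (h | h | h | h) <;> subst h
      exacts [⟨y, .inl rfl, hx⟩, ⟨x, .inl Sym2.eq_swap, hy⟩, ⟨z', .inr rfl, hz⟩,
        ⟨z, .inr Sym2.eq_swap, hz'⟩])
  have hlosers : {v | v ∉ ({x, y, z, z'} : Set W) ∧ ∃ w ∈ ({x, y, z, z'} : Set W),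
      s(v, w) ∈ M} ⊆ {v | s(v, x) ∈ M} ∪ {v | s(v, z') ∈ M} := by
    rintro v ⟨hvS, w, h | h | h | h, hw⟩ <;> subst h
    · exact .inl hw
    · exact absurd (.inr (.inr (.inl (hM.1.eq_of_mem (by rwa [Sym2.eq_swap]) hyzM)))) hvS
    · exact absurd (.inr (.inl (hM.1.eq_of_mem (by rwa [Sym2.eq_swap])
        (by rwa [Sym2.eq_swap])))) hvS
    · exact .inr hw
  have hS : ({x, y, z, z'} : Set W).ncard = 4 := by
    rw [Set.ncard_insert_of_notMem (by simp [hxy.ne, hxz, hxz']),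
      Set.ncard_insert_of_notMem (by simp [hyz, hyz']),
      Set.ncard_pair hzz'.ne]
  have := (Set.ncard_le_ncard hlosers).trans ((Set.ncard_union_le _ _).trans
    (add_le_add (hM.1.ncard_partners_le_one x) (hM.1.ncard_partners_le_one z')))
  omega

end Popular

instance Gad.finite {V : Type u} [Finite V] : Finite (Gad V) := by
  let encode : Gad V → (V ⊕ V ⊕ V ⊕ V) ⊕ (V × V ⊕ V × V)
    | .a i => .inl (.inl i)
    | .b i => .inl (.inr (.inl i))
    | .c i => .inl (.inr (.inr (.inl i)))
    | .d i => .inl (.inr (.inr (.inr i)))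
    | .u i j => .inr (.inl (i, j))
    | .f i j => .inr (.inr (i, j))
  refine Finite.of_injective encode fun g g' h => ?_
  cases g <;> cases g' <;> simp_all [encode]

namespace Reduction

variable {V : Type u} [LinearOrder V] (R : Reduction V)

lemma finite_HV : Finite R.HV :=
  have : Finite V := R.ispvc.1
  Subtype.finite

variable {R} {i j : V}

lemma adj_va_vb : R.H.Adj (R.va i) (R.vb i) :=
  ⟨by simp [va, vb, Subtype.ext_iff], .inl (.ab i)⟩

lemma adj_vu_vu (hij : R.G.Adj i j) : R.H.Adj (R.vu i j hij) (R.vu j i hij.symm) :=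
  ⟨by simp [vu, hij.ne, Subtype.ext_iff], .inl (.uu hij)⟩

lemma eq_of_adj_va {w : R.HV} (h : R.H.Adj (R.va i) w) :
    w = R.vb i ∨ w = R.vc i ∨ w = R.vd i := by
  obtain ⟨w, hw⟩ := w
  rcases h.2 with h | h <;> cases h <;> simp [vb, vc, vd]

lemma eq_of_adj_vb {w : R.HV} (h : R.H.Adj (R.vb i) w) :
    w = R.va i ∨ w = R.vc i ∨ ∃ j, ∃ hij : R.G.Adj i j, w = R.vu i j hij := by
  obtain ⟨w, hw⟩ := w
  rcases h.2 with h | h <;> cases h <;> simp_all [va, vb, vc, vu, Subtype.ext_iff]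

lemma eq_of_adj_vu {hij : R.G.Adj i j} {w : R.HV} (h : R.H.Adj (R.vu i j hij) w) :
    w = R.vu j i hij.symm ∨ w = R.vb i := by
  obtain ⟨w, hw⟩ := w
  rcases h.2 with h | h <;> cases h <;> simp [vu, vb]

variable {M : Set (Sym2 R.HV)}

lemma blocking_va_vb [Finite R.HV] (hM : IsMatching R.H M) (hab : s(R.va i, R.vb i) ∉ M) :
    R.prefH (R.va i) (R.vb i) < rank R.H R.prefH M (R.va i) ∧
      R.prefH (R.vb i) (R.va i) < rank R.H R.prefH M (R.vb i) := by
  rw [show R.prefH (R.va i) (R.vb i) = 1 from R.pref_ab i,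
    show R.prefH (R.vb i) (R.va i) = 1 from R.pref_ba i]
  constructor
  · refine lt_rank hM (fun w hw => ?_) (one_le_ncard_neighborSet adj_va_vb)
    rcases eq_of_adj_va (hM.1 hw) with rfl | rfl | rfl
    · exact absurd hw hab
    · simp [prefH, va, vc, pref_ac]
    · simp [prefH, va, vd, pref_ad]
  · refine lt_rank hM (fun w hw => ?_) (one_le_ncard_neighborSet adj_va_vb.symm)
    rcases eq_of_adj_vb (hM.1 hw) with rfl | rfl | ⟨j, hij, rfl⟩
    · exact absurd (by rwa [Sym2.eq_swap]) hab
    · simp [prefH, vb, vc, pref_bc]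
    · exact ((R.pref_bu i).mapsTo ⟨j, hij, rfl⟩).1

lemma blocking_vu_vu [Finite R.HV] (hM : IsMatching R.H M) {hij : R.G.Adj i j}
    (hbu : s(R.vb i, R.vu i j hij) ∈ M) :
    R.prefH (R.vu i j hij) (R.vu j i hij.symm) < rank R.H R.prefH M (R.vu i j hij) ∧
      R.prefH (R.vu j i hij.symm) (R.vu i j hij) < rank R.H R.prefH M (R.vu j i hij.symm) := by
  have hub : s(R.vu i j hij, R.vb i) ∈ M := by rwa [Sym2.eq_swap]
  rw [show R.prefH (R.vu i j hij) (R.vu j i hij.symm) = 1 from R.pref_uu i j hij,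
    show R.prefH (R.vu j i hij.symm) (R.vu i j hij) = 1 from R.pref_uu j i hij.symm,
    rank_eq_of_mem hM hub, show R.prefH (R.vu i j hij) (R.vb i) = 2 from R.pref_ub i j hij]
  refine ⟨one_lt_two,
    lt_rank hM (fun w hw => ?_) (one_le_ncard_neighborSet (adj_vu_vu hij).symm)⟩
  rcases eq_of_adj_vu (hM.1 hw) with rfl | rfl
  · have := hM.eq_of_mem (by rwa [Sym2.eq_swap]) hub
    simp [vu, vb, Subtype.ext_iff] at this
  · simp [prefH, vu, vb, pref_ub, hij.symm]

end Reduction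

open Reduction in
/-- In a popular matching `M` in `H`, for every vertex `i` of `G`, either
`{a_i, b_i} ∈ M`, or both `{a_i, d_i} ∈ M` and `{b_i, c_i} ∈ M`. -/
theorem popular_configuration {V : Type u} [LinearOrder V] (R : Reduction V)
    (M : Set (Sym2 R.HV)) (hM : IsPopular R.H R.prefH M) :
    ∀ i : V, s(R.va i, R.vb i) ∈ M ∨
      (s(R.va i, R.vd i) ∈ M ∧ s(R.vb i, R.vc i) ∈ M) := by
  have := R.finite_HV
  intro i
  by_contra! h
  obtain ⟨hab, hadbc⟩ := h
  obtain ⟨ha, hb⟩ := blocking_va_vb hM.1 hab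
  obtain ⟨p, hp⟩ := hM.matched_of_blocking adj_va_vb ha hb
  obtain ⟨q, hq⟩ := hM.matched_of_blocking adj_va_vb.symm hb ha
  rcases eq_of_adj_vb (hM.1.1 hq) with rfl | rfl | ⟨j, hij, rfl⟩
  · exact hab (by rwa [Sym2.eq_swap])
  · rcases eq_of_adj_va (hM.1.1 hp) with rfl | rfl | rfl
    · exact hab hp
    · have := hM.1.eq_of_mem (v := R.vc i) (w := R.va i) (w' := R.vb i)
        (by rwa [Sym2.eq_swap]) (by rwa [Sym2.eq_swap])
      simp [va, vb, Subtype.ext_iff] at this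
    · exact hadbc hp hq
  · obtain ⟨hu, hu'⟩ := blocking_vu_vu hM.1 hq
    exact hM.false_of_two_blocking adj_va_vb (adj_vu_vu hij) (by simp [va, vu, Subtype.ext_iff])
      (by simp [va, vu, Subtype.ext_iff]) (by simp [vb, vu, Subtype.ext_iff])
      (by simp [vb, vu, Subtype.ext_iff]) hq ha hb hu hu'
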